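/- arXiv:1105.2847 — 3 statements merged into one kernel-verified Lean document; each statement's English description precedes it below -/
import Mathlib

section
/- For every ε > 0 there exists a constant C_ε > 0 such that for all real C ≥ 1, P{ |R(V)| ≤ C_ε·(C·V)^{1/2}·(log V)^{3/2+ε} for all V ≥ 10 } ≥ 1 − C^{−1} (the event in question is measurable). -/
open MeasureTheory ProbabilityTheory Filter Topology Set
open scoped Classical

noncomputable section

/-! ### Poisson process side -/

/-- `R(V) = N(V) - V` where `N(V) = 2·#{j : t j ≤ V}`. -/
def Rpt (t : ℕ → ℝ) (V : ℝ) : ℝ := 2 * (Nat.card {j : ℕ // t j ≤ V}) - V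

/-- `∫_A^B V^(-2c) dR(V) = 2 ∑_{A < t j ≤ B} (t j)^(-2c) - ∫_A^B V^(-2c) dV`. -/
def RInt (t : ℕ → ℝ) (c A B : ℝ) : ℝ :=
  2 * (∑' j : ℕ, if A < t j ∧ t j ≤ B then t j ^ (-(2*c)) else 0)
    - ∫ V in Set.Ioc A B, V ^ (-(2*c))

/-- `H(c)` exists with value `l`, i.e. `∫_0^∞ V^(-2c) dR(V)` converges to `l`. -/
def HasH (t : ℕ → ℝ) (c l : ℝ) : Prop :=
  Tendsto (fun B => RInt t c 0 B) atTop (𝓝 l)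

/-- The random variable `H(c)`, defined as `0` when the limit does not exist. -/
def Hval (t : ℕ → ℝ) (c : ℝ) : ℝ := if h : ∃ l, HasH t c l then h.choose else 0

/-- The random variable `Z₀`, defined as `0` when the limit does not exist. -/
def Z0val (t : ℕ → ℝ) : ℝ :=
  if h : ∃ l, Tendsto
      (fun B => 2 * (∑' j : ℕ, if 1 < t j ∧ t j ≤ B then (t j)⁻¹ else 0) - Real.log B)
      atTop (𝓝 l)
  then 2 * (∑' j : ℕ, if t j ≤ 1 then (t j)⁻¹ else 0) + h.choose else 0

/-! ### Lattice side -/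

abbrev SLn (n : ℕ) := Matrix.SpecialLinearGroup (Fin n) ℝ

instance matMS (n : ℕ) : MeasurableSpace (Matrix (Fin n) (Fin n) ℝ) :=
  (inferInstance : MeasurableSpace (Fin n → Fin n → ℝ))

instance slnMS (n : ℕ) : MeasurableSpace (SLn n) := Subtype.instMeasurableSpace

/-- The subgroup `SL(n,ℤ)` inside `SL(n,ℝ)`. -/
def SLZ (n : ℕ) : Subgroup (SLn n) :=
  (Matrix.SpecialLinearGroup.map (n := Fin n) (Int.castRingHom ℝ)).range

/-- The space `X_n = SL(n,ℤ) \ SL(n,ℝ)` of right cosets, i.e. of lattices `ℤⁿg`. -/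
def XSp (n : ℕ) : Type := Quotient (QuotientGroup.rightRel (SLZ n))

instance (n : ℕ) : MeasurableSpace (XSp n) := Quotient.instMeasurableSpace

/-- Right translation by `g` on `X_n`. -/
def rmul (n : ℕ) (g : SLn n) : XSp n → XSp n :=
  Quotient.map' (fun h => h * g) (fun a b hab => by
    rw [QuotientGroup.rightRel_apply] at hab ⊢
    have : b * g * (a * g)⁻¹ = b * a⁻¹ := by group
    rw [this]; exact hab)

/-- squared Euclidean norm on `ℝⁿ`. -/
def nsq {n : ℕ} (x : Fin n → ℝ) : ℝ := ∑ i, x i ^ 2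

/-- The point `m·A` of the lattice `ℤⁿA` (rows of `A` generate the lattice). -/
def latVec {n : ℕ} (A : Matrix (Fin n) (Fin n) ℝ) (m : Fin n → ℤ) : Fin n → ℝ :=
  Matrix.vecMul (fun i => (m i : ℝ)) A

/-- matrix whose rows generate the dual lattice `(ℤⁿg)* = ℤⁿ(gᵀ)⁻¹` of `ℤⁿg`. -/
def dualMat {n : ℕ} (g : SLn n) : Matrix (Fin n) (Fin n) ℝ :=
  Matrix.transpose ((g⁻¹ : SLn n) : Matrix (Fin n) (Fin n) ℝ)

/-- `G(s,x) = ∫_1^∞ t^(s-1) e^(-xt) dt`. -/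
def Gfun (s x : ℝ) : ℝ := ∫ t in Set.Ioi (1:ℝ), t ^ (s - 1) * Real.exp (-(x * t))

/-- The volume `V_n = π^(n/2)/Γ(n/2+1)` of the unit ball in `ℝⁿ`. -/
def ballVol (n : ℕ) : ℝ := Real.pi ^ ((n:ℝ)/2) / Real.Gamma ((n:ℝ)/2 + 1)

/-- `V_n·|v|ⁿ`, the volume of the ball of radius `|v|` in `ℝⁿ`. -/
def volOf (n : ℕ) (v : Fin n → ℝ) : ℝ := ballVol n * nsq v ^ ((n:ℝ)/2)

/-- The Epstein zeta function `E_n(L,s)` of the lattice `L = ℤⁿ g`, for real `0 < s < n/2`,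
given by its absolutely convergent incomplete-gamma expansion. -/
def epstein (n : ℕ) (g : SLn n) (s : ℝ) : ℝ :=
  Real.pi ^ s / Real.Gamma s *
    (-(1 / ((n:ℝ)/2 - s))
      + (∑' m : {m : Fin n → ℤ // m ≠ 0},
          Gfun s (Real.pi * nsq (latVec (g : Matrix (Fin n) (Fin n) ℝ) m.val)))
      - 1/s
      + ∑' m : {m : Fin n → ℤ // m ≠ 0},
          Gfun ((n:ℝ)/2 - s) (Real.pi * nsq (latVec (dualMat g) m.val)))

/-- `N_n(V)`: the number of nonzero points of `ℤⁿ g` in the closed ball of volume `V`. -/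
def NnF (n : ℕ) (g : SLn n) (V : ℝ) : ℕ :=
  Nat.card {m : Fin n → ℤ // m ≠ 0 ∧ volOf n (latVec (g : Matrix (Fin n) (Fin n) ℝ) m) ≤ V}

/-- `R_n(V) = N_n(V) - V`. -/
def RnF (n : ℕ) (g : SLn n) (V : ℝ) : ℝ := NnF n g V - V

end

/-!
`T k` is a sum of `k + 1` independent exponential variables of rate `1/2`, so its moment
generating function is `(1 - 2t)^(-(k+1))`, and Chernoff's bound gives
`|T k - 2(k+1)| < 4 √((k+1) ℓ_k) + 4 ℓ_k` outside an event of probability `2 e^(-ℓ_k)`.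
With `ℓ_k = log C + 2 log (k+1) + 2` these exceptional probabilities sum to `π²/(3e²C) ≤ 1/C`.
Off the exceptional events the points increase and stay in these bands around `2(k+1)`,
so if `m` points lie in `[0, V]` then `|R(V)| = |2m - V| ≤ 2 + 4 √((m+1) ℓ_m) + 4 ℓ_m`;
the same inequality forces `m + 1 ≤ 32 √C V`, and the right-hand side is `O(√(CV) log V)`.
-/

open Real

namespace ProbabilityTheory

section ExponentialMGF

lemma exponentialPDFReal_mul_exp (r t x : ℝ) :
    exponentialPDFReal r x * exp (t * x) =
      (Ici 0).indicator (fun x => r * exp ((t - r) * x)) x := by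
  by_cases hx : 0 ≤ x
  · simp only [exponentialPDFReal, gammaPDFReal, if_pos hx, indicator_of_mem (mem_Ici.mpr hx)]
    simp only [rpow_one, Gamma_one, div_one, sub_self, rpow_zero, mul_one, mul_assoc, ← exp_add]
    ring_nf
  · simp [exponentialPDFReal, gammaPDFReal, hx]

lemma expMeasure_eq_withDensity (r : ℝ) :
    expMeasure r = volume.withDensity fun x => ENNReal.ofReal (exponentialPDFReal r x) := rfl

variable {r t : ℝ}

lemma integrable_exp_mul_expMeasure (hr : 0 < r) (ht : t < r) :
    Integrable (fun x => exp (t * x)) (expMeasure r) := by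
  rw [expMeasure_eq_withDensity, integrable_withDensity_iff_integrable_smul'
    (measurable_exponentialPDFReal r).ennreal_ofReal (by simp)]
  simp_rw [ENNReal.toReal_ofReal (exponentialPDFReal_nonneg hr _), smul_eq_mul,
    exponentialPDFReal_mul_exp]
  rw [integrable_indicator_iff measurableSet_Ici, integrableOn_Ici_iff_integrableOn_Ioi]
  exact (integrableOn_exp_mul_Ioi (by linarith) 0).const_mul r

lemma integral_exp_mul_expMeasure (hr : 0 < r) (ht : t < r) :
    ∫ x, exp (t * x) ∂expMeasure r = r / (r - t) := by
  rw [expMeasure_eq_withDensity, integral_withDensity_eq_integral_toReal_smul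
    (measurable_exponentialPDFReal r).ennreal_ofReal (by simp)]
  simp_rw [ENNReal.toReal_ofReal (exponentialPDFReal_nonneg hr _), smul_eq_mul,
    exponentialPDFReal_mul_exp]
  rw [integral_indicator measurableSet_Ici, integral_Ici_eq_integral_Ioi, integral_const_mul,
    integral_exp_mul_Ioi (by linarith), mul_zero, exp_zero, ← neg_sub r t, div_neg, neg_div,
    neg_neg, mul_one_div]

end ExponentialMGF

section GammaTail

variable {Ω : Type*} [MeasurableSpace Ω] {P : Measure Ω} [IsFiniteMeasure P] {S : Ω → ℝ}
  {r u : ℝ} {n : ℕ}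

lemma measureReal_ge_le_of_mgf_eq_gamma (hr : 0 < r) (hu : 0 ≤ u)
    (hint : ∀ t < r, Integrable (fun ω => exp (t * S ω)) P)
    (hmgf : ∀ t < r, mgf S P t = (r / (r - t)) ^ n) :
    P.real {ω | n * (1 + 2 * u + 2 * u ^ 2) / r ≤ S ω} ≤ exp (-(n * u ^ 2)) := by
  set y := n * (1 + 2 * u + 2 * u ^ 2) / r
  set t := r * u / (1 + u)
  have h1u : 0 < 1 + u := by linarith
  have htr : t < r := by rw [div_lt_iff₀ h1u]; nlinarith
  have hratio : r / (r - t) = 1 + u := by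
    rw [show r - t = r / (1 + u) by simp only [t]; field_simp; ring, div_div_cancel₀ hr.ne']
  have hty : t * y = n * u * (1 + 2 * u + 2 * u ^ 2) / (1 + u) := by
    simp only [t, y]
    field_simp
  calc P.real {ω | y ≤ S ω} ≤ exp (-t * y) * mgf S P t :=
        measure_ge_le_exp_mul_mgf y (by positivity) (hint t htr)
    _ = exp (-t * y) * (1 + u) ^ n := by rw [hmgf t htr, hratio]
    _ ≤ exp (-t * y) * exp u ^ n := by gcongr; linarith [add_one_le_exp u]
    _ = exp (-(t * y) + n * u) := by rw [← exp_nat_mul, ← exp_add, neg_mul]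
    _ ≤ exp (-(n * u ^ 2)) := by
        refine exp_le_exp.mpr ?_
        have : n * u + n * u ^ 2 ≤ n * u * (1 + 2 * u + 2 * u ^ 2) / (1 + u) := by
          rw [le_div_iff₀ h1u]
          nlinarith [mul_nonneg (Nat.cast_nonneg (α := ℝ) n) (pow_nonneg hu 3)]
        linarith

lemma measureReal_le_le_of_mgf_eq_gamma (hr : 0 < r) (hu : 0 ≤ u)
    (hint : ∀ t < r, Integrable (fun ω => exp (t * S ω)) P)
    (hmgf : ∀ t < r, mgf S P t = (r / (r - t)) ^ n) :
    P.real {ω | S ω ≤ n * (1 - 2 * u) / r} ≤ exp (-(n * u ^ 2)) := by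
  set y := n * (1 - 2 * u) / r
  set t := -(r * u)
  have hru : 0 ≤ r * u := mul_nonneg hr.le hu
  have htr : t < r := by linarith
  have hratio : r / (r - t) = (1 + u)⁻¹ := by
    rw [show r - t = r * (1 + u) by simp only [t]; ring, div_mul_cancel_left₀ hr.ne']
  have hexp : exp (u - u ^ 2) ≤ 1 + u := by
    refine (le_log_iff_exp_le (by linarith)).mp (le_trans ?_ (le_log_one_add_of_nonneg hu))
    rw [le_div_iff₀ (by linarith)]
    nlinarith [pow_nonneg hu 3]
  calc P.real {ω | S ω ≤ y} ≤ exp (-t * y) * mgf S P t :=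
        measure_le_le_exp_mul_mgf y (by linarith) (hint t htr)
    _ = exp (-t * y) * ((1 + u)⁻¹) ^ n := by rw [hmgf t htr, hratio]
    _ ≤ exp (-t * y) * exp (-(u - u ^ 2)) ^ n := by
        gcongr; rw [exp_neg]; gcongr
    _ = exp (-(n * u ^ 2)) := by
        rw [← exp_nat_mul, ← exp_add]
        congr 1
        simp only [t, y]
        field_simp
        ring

lemma measure_le_abs_sub_le_of_mgf_eq_gamma (hr : 0 < r) (hu : 0 ≤ u)
    (hint : ∀ t < r, Integrable (fun ω => exp (t * S ω)) P)
    (hmgf : ∀ t < r, mgf S P t = (r / (r - t)) ^ n) :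
    P {ω | n * (2 * u + 2 * u ^ 2) / r ≤ |S ω - n / r|}
      ≤ ENNReal.ofReal (2 * exp (-(n * u ^ 2))) := by
  have hsub : {ω | n * (2 * u + 2 * u ^ 2) / r ≤ |S ω - n / r|} ⊆
      {ω | n * (1 + 2 * u + 2 * u ^ 2) / r ≤ S ω} ∪ {ω | S ω ≤ n * (1 - 2 * u) / r} := by
    intro ω hω
    simp only [mem_union, mem_ofPred_eq] at hω ⊢
    have hn : (0 : ℝ) ≤ n * u ^ 2 / r := by positivity
    have e1 : n * (1 + 2 * u + 2 * u ^ 2) / r = n / r + n * (2 * u + 2 * u ^ 2) / r := by ring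
    have e2 : n * (1 - 2 * u) / r = n / r - n * (2 * u + 2 * u ^ 2) / r + 2 * (n * u ^ 2 / r) := by
      ring
    rcases le_abs'.mp hω with h | h
    · right; linarith
    · left; linarith
  calc P _ ≤ P {ω | n * (1 + 2 * u + 2 * u ^ 2) / r ≤ S ω} + P {ω | S ω ≤ n * (1 - 2 * u) / r} :=
        (measure_mono hsub).trans (measure_union_le _ _)
    _ = ENNReal.ofReal (P.real {ω | n * (1 + 2 * u + 2 * u ^ 2) / r ≤ S ω})
          + ENNReal.ofReal (P.real {ω | S ω ≤ n * (1 - 2 * u) / r}) := by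
        rw [ofReal_measureReal, ofReal_measureReal]
    _ ≤ ENNReal.ofReal (exp (-(n * u ^ 2))) + ENNReal.ofReal (exp (-(n * u ^ 2))) := by
        gcongr
        · exact measureReal_ge_le_of_mgf_eq_gamma hr hu hint hmgf
        · exact measureReal_le_le_of_mgf_eq_gamma hr hu hint hmgf
    _ = ENNReal.ofReal (2 * exp (-(n * u ^ 2))) := by
        rw [two_mul, ENNReal.ofReal_add (exp_pos _).le (exp_pos _).le]

end GammaTail

section ExponentialSum

variable {Ω ι : Type*} [MeasurableSpace Ω] {P : Measure Ω} {r t : ℝ}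

lemma mgf_eq_of_map_eq_expMeasure {Y : Ω → ℝ} (hY : Measurable Y)
    (hlaw : P.map Y = expMeasure r) (hr : 0 < r) (ht : t < r) :
    mgf Y P t = r / (r - t) := by
  rw [← mgf_id_map hY.aemeasurable, hlaw]
  exact integral_exp_mul_expMeasure hr ht

lemma integrable_exp_mul_of_map_eq_expMeasure {Y : Ω → ℝ} (hY : Measurable Y)
    (hlaw : P.map Y = expMeasure r) (hr : 0 < r) (ht : t < r) :
    Integrable (fun ω => exp (t * Y ω)) P := by
  have h := integrable_exp_mul_expMeasure hr ht
  rw [← hlaw] at h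
  exact (integrable_map_measure (by fun_prop) hY.aemeasurable).mp h

variable {X : ι → Ω → ℝ}

lemma iIndepFun.mgf_sum_of_map_eq_expMeasure (hindep : iIndepFun X P)
    (hX : ∀ i, Measurable (X i)) (hlaw : ∀ i, P.map (X i) = expMeasure r) (hr : 0 < r)
    (ht : t < r) (s : Finset ι) :
    mgf (∑ i ∈ s, X i) P t = (r / (r - t)) ^ s.card := by
  rw [hindep.mgf_sum hX, Finset.prod_congr rfl fun i _ =>
    mgf_eq_of_map_eq_expMeasure (hX i) (hlaw i) hr ht, Finset.prod_const]

lemma iIndepFun.integrable_exp_mul_sum_of_map_eq_expMeasure [IsFiniteMeasure P]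
    (hindep : iIndepFun X P) (hX : ∀ i, Measurable (X i))
    (hlaw : ∀ i, P.map (X i) = expMeasure r) (hr : 0 < r) (ht : t < r) (s : Finset ι) :
    Integrable (fun ω => exp (t * (∑ i ∈ s, X i) ω)) P :=
  hindep.integrable_exp_mul_sum hX fun i _ =>
    integrable_exp_mul_of_map_eq_expMeasure (hX i) (hlaw i) hr ht

end ExponentialSum

end ProbabilityTheory

noncomputable def tailLevel (C : ℝ) (k : ℕ) : ℝ := log C + 2 * log (k + 1) + 2

noncomputable def bandWidth (C : ℝ) (k : ℕ) : ℝ :=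
  4 * √((k + 1) * tailLevel C k) + 4 * tailLevel C k

lemma tailLevel_nonneg {C : ℝ} (hC : 1 ≤ C) (k : ℕ) : 0 ≤ tailLevel C k := by
  have := log_nonneg hC
  have := log_nonneg (show (1 : ℝ) ≤ k + 1 by simp)
  unfold tailLevel
  linarith

lemma measure_bandWidth_le_abs_sub_le {Ω : Type*} [MeasurableSpace Ω] {P : Measure Ω}
    [IsProbabilityMeasure P] {X : ℕ → Ω → ℝ} (hX : ∀ i, Measurable (X i))
    (hindep : iIndepFun X P) (hlaw : ∀ i, P.map (X i) = expMeasure (1 / 2)) {C : ℝ} (hC : 1 ≤ C)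
    (k : ℕ) :
    P {ω | bandWidth C k ≤ |∑ i ∈ Finset.range (k + 1), X i ω - 2 * (k + 1)|}
      ≤ ENNReal.ofReal (2 * exp (-tailLevel C k)) := by
  have hn : (0 : ℝ) < k + 1 := by positivity
  set u := √(tailLevel C k / (k + 1))
  have hu2 : (k + 1) * u ^ 2 = tailLevel C k := by
    rw [sq_sqrt (div_nonneg (tailLevel_nonneg hC k) hn.le)]
    field_simp
  have hnu : (k + 1) * u = √((k + 1) * tailLevel C k) := by
    rw [← hu2, show (k + 1) * ((k + 1) * u ^ 2) = ((k + 1) * u) ^ 2 by ring,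
      sqrt_sq (by positivity)]
  have hwidth : bandWidth C k = (k + 1) * (2 * u + 2 * u ^ 2) / (1 / 2) := by
    rw [bandWidth, ← hnu, ← hu2]
    ring
  have hmean : ((k : ℝ) + 1) / (1 / 2) = 2 * (k + 1) := by ring
  have h := measure_le_abs_sub_le_of_mgf_eq_gamma (P := P) (S := ∑ i ∈ Finset.range (k + 1), X i)
    (n := k + 1) (u := u) (by norm_num : (0 : ℝ) < 1 / 2) (sqrt_nonneg _)
    (fun t ht => hindep.integrable_exp_mul_sum_of_map_eq_expMeasure hX hlaw (by norm_num) ht _)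
    (fun t ht => by
      rw [hindep.mgf_sum_of_map_eq_expMeasure hX hlaw (by norm_num) ht, Finset.card_range])
  push_cast at h
  rw [hu2, hmean] at h
  simpa only [hwidth, Finset.sum_apply] using h

lemma tsum_ofReal_two_mul_exp_neg_tailLevel_le {C : ℝ} (hC : 0 < C) :
    ∑' k, ENNReal.ofReal (2 * exp (-tailLevel C k)) ≤ ENNReal.ofReal C⁻¹ := by
  have hterm (k : ℕ) :
      2 * exp (-tailLevel C k) = 2 * exp (-2) / C * (1 / ((k + 1 : ℕ) : ℝ) ^ 2) := by
    have hlog : 2 * log ((k : ℝ) + 1) = log (((k : ℝ) + 1) ^ 2) := by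
      rw [log_pow]; norm_num
    rw [tailLevel, hlog, neg_add, neg_add, exp_add, exp_add, exp_neg (log C), exp_log hC,
      exp_neg (log _), exp_log (by positivity)]
    push_cast
    field_simp
  have hsum : HasSum (fun k : ℕ => 2 * exp (-tailLevel C k)) (2 * exp (-2) / C * (π ^ 2 / 6)) := by
    have h := ((hasSum_nat_add_iff' 1).mpr hasSum_zeta_two).mul_left (2 * exp (-2) / C)
    simp only [Finset.sum_range_one, Nat.cast_zero, ne_eq, OfNat.ofNat_ne_zero,
      not_false_eq_true, zero_pow, div_zero, sub_zero] at h
    simpa only [hterm] using h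
  rw [← ENNReal.ofReal_tsum_of_nonneg (fun k => by positivity) hsum.summable, hsum.tsum_eq]
  refine ENNReal.ofReal_le_ofReal ?_
  have hexp2 : 7 ≤ exp 2 := by
    have h := exp_one_gt_d9
    rw [show (2 : ℝ) = 1 + 1 by norm_num, exp_add]
    nlinarith
  have hkey : exp (-2) * π ^ 2 ≤ 3 := by
    rw [exp_neg, inv_mul_le_iff₀ (exp_pos 2)]
    nlinarith [pi_lt_d2, pi_pos]
  calc 2 * exp (-2) / C * (π ^ 2 / 6) = exp (-2) * π ^ 2 / 3 * C⁻¹ := by ring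
    _ ≤ 1 * C⁻¹ := by gcongr; linarith
    _ = C⁻¹ := one_mul _

lemma measure_lt_zero_of_map_eq_expMeasure {Ω : Type*} [MeasurableSpace Ω] {P : Measure Ω}
    {Y : Ω → ℝ} {r : ℝ} (hY : Measurable Y) (hlaw : P.map Y = expMeasure r) :
    P {ω | Y ω < 0} = 0 := by
  rw [show {ω | Y ω < 0} = Y ⁻¹' Iio 0 from rfl, ← Measure.map_apply hY measurableSet_Iio, hlaw,
    expMeasure_eq_withDensity, withDensity_apply _ measurableSet_Iio]
  exact lintegral_exponentialPDF_of_nonpos le_rfl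

lemma one_sub_inv_le_measure_abs_sub_lt_bandWidth {Ω : Type*} [MeasurableSpace Ω]
    {P : Measure Ω} [IsProbabilityMeasure P] {X : ℕ → Ω → ℝ} (hX : ∀ i, Measurable (X i))
    (hindep : iIndepFun X P) (hlaw : ∀ i, P.map (X i) = expMeasure (1 / 2)) {C : ℝ}
    (hC : 1 ≤ C) :
    ENNReal.ofReal (1 - C⁻¹) ≤ P {ω | (∀ i, 0 ≤ X i ω) ∧
      ∀ k : ℕ, |∑ i ∈ Finset.range (k + 1), X i ω - 2 * (k + 1)| < bandWidth C k} := by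
  set G := {ω | (∀ i, 0 ≤ X i ω) ∧
      ∀ k : ℕ, |∑ i ∈ Finset.range (k + 1), X i ω - 2 * (k + 1)| < bandWidth C k}
  have hcompl : Gᶜ ⊆ (⋃ i, {ω | X i ω < 0}) ∪
      ⋃ k : ℕ, {ω | bandWidth C k ≤ |∑ i ∈ Finset.range (k + 1), X i ω - 2 * (k + 1)|} := by
    intro ω hω
    simp only [G, mem_compl_iff, mem_ofPred_eq, not_and_or, not_forall, not_le, not_lt] at hω
    simpa only [mem_union, mem_iUnion, mem_ofPred_eq] using hω
  have hbad : P Gᶜ ≤ ENNReal.ofReal C⁻¹ :=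
    calc P Gᶜ ≤ P (⋃ i, {ω | X i ω < 0}) + ∑' k : ℕ,
          P {ω | bandWidth C k ≤ |∑ i ∈ Finset.range (k + 1), X i ω - 2 * (k + 1)|} :=
          (measure_mono hcompl).trans
            ((measure_union_le _ _).trans (by gcongr; exact measure_iUnion_le _))
      _ ≤ 0 + ∑' k, ENNReal.ofReal (2 * exp (-tailLevel C k)) := by
          gcongr with k
          · exact (measure_iUnion_null fun i =>
              measure_lt_zero_of_map_eq_expMeasure (hX i) (hlaw i)).le
          · exact measure_bandWidth_le_abs_sub_le hX hindep hlaw hC k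
      _ ≤ ENNReal.ofReal C⁻¹ := by
          rw [zero_add]; exact tsum_ofReal_two_mul_exp_neg_tailLevel_le (by linarith)
  have h1 := measure_univ_le_add_compl (μ := P) G
  rw [measure_univ] at h1
  rw [ENNReal.ofReal_sub _ (by positivity), ENNReal.ofReal_one]
  exact tsub_le_iff_right.mpr (h1.trans (add_le_add le_rfl hbad))

section CountingFunction

variable {t φ : ℕ → ℝ} {V : ℝ}

lemma Rpt_eq_of_monotone (ht : Monotone t) {m : ℕ} (hle : ∀ j < m, t j ≤ V) (hlt : V < t m) :
    Rpt t V = 2 * m - V := by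
  have hset : {j : ℕ | t j ≤ V} = Iio m := by
    ext j
    refine ⟨fun hj => ?_, hle j⟩
    by_contra h
    exact (hlt.trans_le (ht (not_lt.mp h))).not_ge hj
  have hcard : Nat.card {j : ℕ // t j ≤ V} = m :=
    (Nat.card_congr (Equiv.setCongr hset)).trans (by simp)
  rw [Rpt, hcard]

lemma abs_two_mul_sub_le (hφ : Monotone φ) (hb : ∀ k, |t k - 2 * (k + 1)| ≤ φ k) (hV : 0 ≤ V)
    {m : ℕ} (hle : ∀ j < m, t j ≤ V) (hlt : V < t m) : |2 * m - V| ≤ 2 + φ m := by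
  refine abs_le.mpr ⟨by linarith [(abs_le.mp (hb m)).2], ?_⟩
  cases m with
  | zero =>
    simp only [Nat.cast_zero, mul_zero]
    linarith [(abs_nonneg _).trans (hb 0)]
  | succ j =>
    have := (abs_le.mp (hb j)).1
    have := hle j j.lt_succ_self
    have := hφ j.le_succ
    push_cast
    linarith

lemma exists_Rpt_eq_and_abs_le (ht : Monotone t) (htop : Tendsto t atTop atTop)
    (hφ : Monotone φ) (hb : ∀ k, |t k - 2 * (k + 1)| ≤ φ k) (hV : 0 ≤ V) :
    ∃ m : ℕ, Rpt t V = 2 * m - V ∧ |2 * m - V| ≤ 2 + φ m := by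
  have hex : ∃ k, V < t k := (htop.eventually_gt_atTop V).exists
  have hle (j : ℕ) (hj : j < Nat.find hex) : t j ≤ V := not_lt.mp (Nat.find_min hex hj)
  exact ⟨Nat.find hex, Rpt_eq_of_monotone ht hle (Nat.find_spec hex),
    abs_two_mul_sub_le hφ hb hV hle (Nat.find_spec hex)⟩

end CountingFunction

lemma log_thirtyTwo_lt : log 32 < 7 / 2 := by
  rw [show (32 : ℝ) = 2 ^ 5 by norm_num, log_pow]
  linarith [log_two_lt_d9]

lemma two_le_log_of_ten_le {V : ℝ} (hV : 10 ≤ V) : 2 ≤ log V := by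
  rw [le_log_iff_exp_le (by linarith), show (2 : ℝ) = 1 + 1 by norm_num, exp_add]
  nlinarith [exp_one_lt_d9, exp_pos 1]

lemma log_le_two_mul_sqrt_sub_two {C : ℝ} (hC : 0 < C) : log C ≤ 2 * √C - 2 := by
  have := log_le_sub_one_of_pos (sqrt_pos.mpr hC)
  rw [log_sqrt hC.le] at this
  linarith

section BandWidth

variable {C : ℝ}

lemma tailLevel_monotone : Monotone (tailLevel C) := fun k l hkl => by
  have : log ((k : ℝ) + 1) ≤ log ((l : ℝ) + 1) :=
    log_le_log (by positivity) (by exact_mod_cast Nat.succ_le_succ hkl)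
  unfold tailLevel
  linarith

lemma bandWidth_monotone (hC : 1 ≤ C) : Monotone (bandWidth C) := fun k l hkl => by
  have := tailLevel_monotone (C := C) hkl
  unfold bandWidth
  gcongr
  exact tailLevel_nonneg hC k

lemma bandWidth_le (hC : 1 ≤ C) (k : ℕ) :
    bandWidth C k ≤ 5 / 4 * (k + 1) + 12 * log C + 96 := by
  have hℓ := tailLevel_nonneg hC k
  have hamgm : 4 * √((k + 1) * tailLevel C k) ≤ (k + 1) / 2 + 8 * tailLevel C k := by
    have hs := sq_sqrt (show 0 ≤ ((k : ℝ) + 1) * tailLevel C k by positivity)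
    nlinarith [sqrt_nonneg (((k : ℝ) + 1) * tailLevel C k),
      sq_nonneg ((k + 1) / 2 - 8 * tailLevel C k)]
  have hlog : log ((k : ℝ) + 1) ≤ (k + 1) / 32 + 5 / 2 := by
    have := log_le_sub_one_of_pos (show 0 < ((k : ℝ) + 1) / 32 by positivity)
    rw [log_div (by positivity) (by norm_num)] at this
    linarith [log_thirtyTwo_lt]
  unfold bandWidth
  unfold tailLevel at hamgm ⊢
  linarith

lemma tendsto_of_abs_sub_le_bandWidth (hC : 1 ≤ C) {t : ℕ → ℝ}
    (hb : ∀ k, |t k - 2 * (k + 1)| ≤ bandWidth C k) : Tendsto t atTop atTop := by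
  refine tendsto_atTop_mono (fun k => ?_) (tendsto_atTop_add_const_right _ (3 / 4 - 12 * log C - 96)
    (tendsto_natCast_atTop_atTop.const_mul_atTop (by norm_num : (0 : ℝ) < 3 / 4)))
  linarith [(abs_le.mp (hb k)).1, bandWidth_le hC k]

variable {V : ℝ} {m : ℕ}

lemma succ_le_of_abs_two_mul_sub_le (hC : 1 ≤ C) (hV : 10 ≤ V)
    (hm : |2 * m - V| ≤ 2 + bandWidth C m) : (m : ℝ) + 1 ≤ 32 * √C * V := by
  have hs : 1 ≤ √C := one_le_sqrt.mpr hC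
  have := log_le_two_mul_sqrt_sub_two (by linarith : 0 < C)
  have := (abs_le.mp hm).2
  have := bandWidth_le hC m
  nlinarith [mul_nonneg (sub_nonneg.mpr hs) (by linarith : (0 : ℝ) ≤ V),
    mul_nonneg (sub_nonneg.mpr hs) (sub_nonneg.mpr hV)]

lemma tailLevel_le (hC : 1 ≤ C) (hV : 10 ≤ V) (hm : (m : ℝ) + 1 ≤ 32 * √C * V) :
    tailLevel C m ≤ 7 * √C * log V := by
  have hC0 : 0 < C := by linarith
  have hs : 1 ≤ √C := one_le_sqrt.mpr hC
  have hL := two_le_log_of_ten_le hV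
  have hlogm : log ((m : ℝ) + 1) ≤ log 32 + log C / 2 + log V := by
    rw [← log_sqrt hC0.le, ← log_mul (by norm_num) (by positivity),
      ← log_mul (by positivity) (by linarith)]
    exact log_le_log (by positivity) hm
  have := log_le_two_mul_sqrt_sub_two hC0
  unfold tailLevel
  nlinarith [log_thirtyTwo_lt, mul_nonneg (sub_nonneg.mpr hs) (sub_nonneg.mpr hL)]

lemma two_add_bandWidth_le (hC : 1 ≤ C) (hV : 10 ≤ V) (hm : |2 * m - V| ≤ 2 + bandWidth C m) :
    2 + bandWidth C m ≤ 64 * √(C * V) * log V := by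
  have hs : 1 ≤ √C := one_le_sqrt.mpr hC
  have hv : 3 ≤ √V := le_sqrt_of_sq_le (by linarith)
  have hL := two_le_log_of_ten_le hV
  have hn := succ_le_of_abs_two_mul_sub_le hC hV hm
  have hℓ := tailLevel_le hC hV hn
  have hℓ0 := tailLevel_nonneg hC m
  rw [sqrt_mul (by linarith)]
  have hroot : √((m + 1) * tailLevel C m) ≤ 11 * (√C * √V) * log V := by
    rw [sqrt_le_left (by positivity)]
    calc ((m : ℝ) + 1) * tailLevel C m ≤ 32 * √C * V * (7 * √C * log V) := by gcongr
      _ = 224 * (√C * √C) * V * log V := by ring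
      _ ≤ (11 * (√C * √V) * log V) ^ 2 := by
          rw [mul_self_sqrt (by linarith), mul_pow, mul_pow, mul_pow, sq_sqrt (by linarith),
            sq_sqrt (by linarith)]
          have : 0 ≤ C * V * log V := by positivity
          nlinarith
  unfold bandWidth
  nlinarith [mul_le_mul_of_nonneg_left hv (by positivity : 0 ≤ √C * log V),
    mul_le_mul hs hv (by norm_num) (by positivity)]

end BandWidth

/-- For every `ε > 0` there is `C_ε > 0` such that for all `C ≥ 1`,
`P{|R(V)| ≤ C_ε (CV)^(1/2) (log V)^(3/2+ε) for all V ≥ 10} ≥ 1 - C⁻¹`. -/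
theorem stmt_9
    {Ω : Type} [MeasurableSpace Ω] (P : Measure Ω) [IsProbabilityMeasure P]
    (X : ℕ → Ω → ℝ) (hX : ∀ j, Measurable (X j))
    (hindep : iIndepFun X P)
    (hlaw : ∀ j, Measure.map (X j) P = expMeasure (1/2))
    (T : ℕ → Ω → ℝ) (hT : ∀ j ω, T j ω = ∑ i ∈ Finset.range (j+1), X i ω)
    :
    ∀ ε : ℝ, 0 < ε → ∃ Cε : ℝ, 0 < Cε ∧
      ∀ C : ℝ, 1 ≤ C →
        ENNReal.ofReal (1 - C⁻¹) ≤
          P {ω | ∀ V : ℝ, 10 ≤ V →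
            |Rpt (fun j => T j ω) V| ≤ Cε * (C * V) ^ ((1:ℝ)/2) * Real.log V ^ ((3:ℝ)/2 + ε)} := by
  intro ε hε
  refine ⟨64, by norm_num, fun C hC => ?_⟩
  refine (one_sub_inv_le_measure_abs_sub_lt_bandWidth hX hindep hlaw hC).trans (measure_mono ?_)
  rintro ω ⟨hpos, hband⟩ V hV
  have hmono : Monotone fun j => T j ω := monotone_nat_of_le_succ fun j => by
    simp only [hT, Finset.sum_range_succ _ (j + 1)]
    linarith [hpos (j + 1)]
  have hb (k : ℕ) : |T k ω - 2 * (k + 1)| ≤ bandWidth C k := by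
    rw [hT]
    exact (hband k).le
  obtain ⟨m, hR, hm⟩ := exists_Rpt_eq_and_abs_le hmono (tendsto_of_abs_sub_le_bandWidth hC hb)
    (bandWidth_monotone hC) hb (by linarith)
  have hL : 1 ≤ log V := by linarith [two_le_log_of_ten_le hV]
  calc |Rpt (fun j => T j ω) V| ≤ 2 + bandWidth C m := hR ▸ hm
    _ ≤ 64 * √(C * V) * log V := two_add_bandWidth_le hC hV hm
    _ ≤ 64 * (C * V) ^ ((1 : ℝ) / 2) * log V ^ ((3 : ℝ) / 2 + ε) := by
        rw [sqrt_eq_rpow]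
        gcongr
        exact self_le_rpow_of_one_le hL (by linarith)
end

section
/- Suppose there is a constant K > 0 such that |R(V)| ≤ K·V^{1/2}·(log V)² for all V ≥ 10. Then: (i) for every c ∈ (1/4, 1/2) the limit lim_{A→∞} ( 2∑_{j : t_j ≤ A} t_j^{−2c} − A^{1−2c}/(1−2c) ) exists in ℝ; and (ii) for every A > 0 and every c > 1/4 the limit lim_{B→∞} ( 2∑_{j : A < t_j ≤ B} t_j^{−2c} − ∫_A^B V^{−2c} dV ) exists in ℝ. -/
/-!
Stieltjes integration by parts against `dN - dV` turns `2 ∑_{A < t_j ≤ B} f(t_j) - ∫_A^B f` into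
`R(B) f(B) - R(A) f(A) - ∫_A^B R f'`. For `f(V) = V^(-2c)` the hypothesis gives
`R(V) = O(V^(1/2 + ε))` for every `ε > 0`, so when `c > 1/4` the boundary term `R(B) B^(-2c)`
tends to `0` and `R(V) V^(-2c-1)` is integrable at infinity. Part (i) is part (ii) at `A = 1`
up to a constant, because `∫_1^B V^(-2c) dV = (B^(1-2c) - 1)/(1-2c)` for `c < 1/2`.
-/

open MeasureTheory ProbabilityTheory Filter Topology Set
open scoped Classical

open Asymptotics

theorem finite_setOf_le_of_tendsto {t : ℕ → ℝ} (htop : Tendsto t atTop atTop) (V : ℝ) :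
    {j | t j ≤ V}.Finite := by
  have h := htop.eventually_gt_atTop V
  rw [← Nat.cofinite_eq_atTop, eventually_cofinite] at h
  simpa using h

theorem monotone_natCard_le {t : ℕ → ℝ} (htop : Tendsto t atTop atTop) :
    Monotone fun V => Nat.card {j // t j ≤ V} := fun _ W hVW =>
  Nat.card_mono (finite_setOf_le_of_tendsto htop W) fun _ hj => le_trans hj hVW

theorem natCard_le_eq_card_filter {t : ℕ → ℝ} (htop : Tendsto t atTop atTop) {V B : ℝ}
    (hVB : V ≤ B) :
    Nat.card {j // t j ≤ V}
      = ((finite_setOf_le_of_tendsto htop B).toFinset.filter (t · ≤ V)).card := by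
  change Nat.card ({j | t j ≤ V} : Set ℕ) = _
  rw [Nat.card_coe_set_eq, ← Set.ncard_coe_finset]
  congr 1
  ext j
  simp only [Finset.coe_filter, Set.Finite.mem_toFinset, Set.mem_ofPred_eq]
  exact ⟨fun h => ⟨h.trans hVB, h⟩, And.right⟩

theorem locallyIntegrable_Rpt {t : ℕ → ℝ} (htop : Tendsto t atTop atTop) :
    LocallyIntegrable (Rpt t) := by
  have hN : Monotone fun V => 2 * (Nat.card {j // t j ≤ V} : ℝ) :=
    (Nat.mono_cast.comp (monotone_natCard_le htop)).const_mul zero_le_two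
  exact hN.locallyIntegrable.sub continuous_id.locallyIntegrable

theorem tsum_ite_le_eq_add {t : ℕ → ℝ} (htop : Tendsto t atTop atTop) (g : ℕ → ℝ) {A B : ℝ}
    (hAB : A ≤ B) :
    (∑' j, if t j ≤ B then g j else 0)
      = (∑' j, if t j ≤ A then g j else 0) + ∑' j, if A < t j ∧ t j ≤ B then g j else 0 := by
  set s := (finite_setOf_le_of_tendsto htop B).toFinset
  have hs : ∀ {P : ℕ → Prop} [DecidablePred P], (∀ j, P j → t j ≤ B) →
      Summable fun j => if P j then g j else 0 := fun hP =>
    summable_of_ne_finset_zero (s := s) fun j hj =>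
      if_neg fun h => hj (by simpa [s] using hP j h)
  rw [← (hs fun _ h => h.trans hAB).tsum_add (hs fun _ h => h.2)]
  congr 1 with j
  by_cases hA : t j ≤ A
  · simp [hA, hA.trans hAB]
  · by_cases hB : t j ≤ B <;> simp [hA, hB, not_le.1 hA]

section AbelSummation

variable {f f' : ℝ → ℝ} {A B : ℝ}

theorem integral_Ioc_indicator_Ici_eq (p : ℝ) :
    ∫ V in Ioc A B, (Ici p).indicator f' V = ∫ V in Ioc (max A p) B, f' V := by
  rw [setIntegral_indicator measurableSet_Ici,
    setIntegral_congr_set ((ae_eq_refl (Ioc A B)).inter Ioi_ae_eq_Ici.symm), Ioc_inter_Ioi]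

theorem indicator_Ioc_eq_sub_integral (hAB : A ≤ B) (hf : ∀ x ∈ Icc A B, HasDerivAt f (f' x) x)
    (hf' : IntervalIntegrable f' volume A B) (p : ℝ) :
    (Ioc A B).indicator f p = (if p ≤ B then f B else 0) - (if p ≤ A then f A else 0)
      - ∫ V in Ioc A B, (Ici p).indicator f' V := by
  have hFTC : ∀ q ∈ Icc A B, ∫ V in Ioc q B, f' V = f B - f q := fun q hq => by
    have hsub : uIcc q B ⊆ Icc A B := by
      rw [uIcc_of_le hq.2]
      exact Icc_subset_Icc_left hq.1
    rw [← intervalIntegral.integral_of_le hq.2, intervalIntegral.integral_eq_sub_of_hasDerivAt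
      (fun x hx => hf x (hsub hx)) (hf'.mono_set (by rwa [uIcc_of_le hAB]))]
  rw [integral_Ioc_indicator_Ici_eq]
  rcases le_or_gt p A with hpA | hpA
  · rw [indicator_of_notMem (fun h => (not_lt.2 hpA) h.1), if_pos (hpA.trans hAB), if_pos hpA,
      max_eq_left hpA, hFTC A ⟨le_rfl, hAB⟩]
    ring
  rcases le_or_gt p B with hpB | hpB
  · rw [indicator_of_mem (show p ∈ Ioc A B from ⟨hpA, hpB⟩), if_pos hpB, if_neg (not_le.2 hpA),
      max_eq_right hpA.le, hFTC p ⟨hpA.le, hpB⟩]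
    ring
  · rw [indicator_of_notMem (fun h => (not_lt.2 h.2) hpB), if_neg (not_le.2 hpB),
      if_neg (not_le.2 (hAB.trans_lt hpB)), Ioc_eq_empty_of_le (hpB.le.trans (le_max_right A p))]
    simp

theorem sum_indicator_Ioc_eq_sub_integral {ι : Type*} (s : Finset ι) (t : ι → ℝ) (hAB : A ≤ B)
    (hf : ∀ x ∈ Icc A B, HasDerivAt f (f' x) x) (hf' : IntervalIntegrable f' volume A B) :
    ∑ j ∈ s, (Ioc A B).indicator f (t j)
      = (s.filter (t · ≤ B)).card * f B - (s.filter (t · ≤ A)).card * f A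
        - ∫ V in Ioc A B, (s.filter (t · ≤ V)).card * f' V := by
  have hcount : ∀ V, ((s.filter (t · ≤ V)).card : ℝ) * f' V = ∑ j ∈ s, (Ici (t j)).indicator f' V :=
    fun V => by
      rw [Finset.card_filter, Nat.cast_sum, Finset.sum_mul]
      refine Finset.sum_congr rfl fun j _ => ?_
      by_cases h : t j ≤ V <;> simp [h]
  simp_rw [indicator_Ioc_eq_sub_integral hAB hf hf', Finset.sum_sub_distrib, hcount]
  rw [integral_finsetSum _ fun j _ => hf'.1.indicator measurableSet_Ici]
  simp only [Finset.sum_ite, Finset.sum_const, nsmul_eq_mul, mul_zero, add_zero]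

theorem integral_Ioc_eq_sub_integral_mul_deriv (hAB : A ≤ B)
    (hf : ∀ x ∈ Icc A B, HasDerivAt f (f' x) x) (hf' : IntervalIntegrable f' volume A B) :
    ∫ V in Ioc A B, f V = B * f B - A * f A - ∫ V in Ioc A B, V * f' V := by
  have hparts := intervalIntegral.integral_mul_deriv_eq_deriv_mul (u := id) (u' := fun _ => 1)
    (fun x _ => hasDerivAt_id x) (fun x hx => hf x (by rwa [uIcc_of_le hAB] at hx))
    intervalIntegrable_const hf'
  simp only [id, one_mul, intervalIntegral.integral_of_le hAB] at hparts
  linarith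

theorem two_tsum_sub_integral_eq {t : ℕ → ℝ} (htop : Tendsto t atTop atTop) (hAB : A ≤ B)
    (hf : ∀ x ∈ Icc A B, HasDerivAt f (f' x) x) (hf' : ContinuousOn f' (Icc A B)) :
    2 * (∑' j, if A < t j ∧ t j ≤ B then f (t j) else 0) - ∫ V in Ioc A B, f V
      = Rpt t B * f B - Rpt t A * f A - ∫ V in Ioc A B, Rpt t V * f' V := by
  set s := (finite_setOf_le_of_tendsto htop B).toFinset
  have hsum : (∑' j, if A < t j ∧ t j ≤ B then f (t j) else 0)
      = ∑ j ∈ s, (Ioc A B).indicator f (t j) := by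
    rw [tsum_eq_sum (s := s) fun j hj => if_neg fun h => hj (by simpa [s] using h.2)]
    exact Finset.sum_congr rfl fun j _ => by simp [indicator_apply]
  have hcount : ∀ V ∈ Ioc A B, Rpt t V * f' V
      = 2 * ((s.filter (t · ≤ V)).card * f' V) - V * f' V := fun V hV => by
    rw [Rpt, natCard_le_eq_card_filter htop hV.2]
    ring
  have hRint : IntegrableOn (fun V => Rpt t V * f' V) (Ioc A B) :=
    (((locallyIntegrable_Rpt htop).integrableOn_isCompact isCompact_Icc).mono_set
      Ioc_subset_Icc_self).mul_continuousOn_of_subset hf' measurableSet_Ioc isCompact_Icc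
      Ioc_subset_Icc_self
  have hVint : IntegrableOn (fun V => V * f' V) (Ioc A B) :=
    ((continuous_id.continuousOn.mul hf').integrableOn_Icc).mono_set Ioc_subset_Icc_self
  have hRcount : ∫ V in Ioc A B, Rpt t V * f' V
      = 2 * (∫ V in Ioc A B, (s.filter (t · ≤ V)).card * f' V) - ∫ V in Ioc A B, V * f' V := by
    refine eq_sub_of_add_eq ?_
    rw [← integral_add hRint hVint, ← integral_const_mul]
    refine setIntegral_congr_fun measurableSet_Ioc fun V hV => ?_
    simp only [hcount V hV]
    ring
  have hf'int := hf'.intervalIntegrable_of_Icc (μ := volume) hAB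
  rw [hsum, sum_indicator_Ioc_eq_sub_integral s t hAB hf hf'int,
    integral_Ioc_eq_sub_integral_mul_deriv hAB hf hf'int, hRcount, Rpt, Rpt,
    natCard_le_eq_card_filter htop le_rfl, natCard_le_eq_card_filter htop hAB]
  ring

end AbelSummation

theorem Rpt_isBigO_rpow {t : ℕ → ℝ} {K : ℝ}
    (hbound : ∀ V : ℝ, 10 ≤ V → |Rpt t V| ≤ K * V ^ ((1:ℝ)/2) * Real.log V ^ 2)
    {a : ℝ} (ha : 1/2 < a) : Rpt t =O[atTop] (· ^ a) := by
  have hR : Rpt t =O[atTop] fun V => V ^ ((1:ℝ)/2) * Real.log V ^ 2 := by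
    refine IsBigO.of_bound K ?_
    filter_upwards [eventually_ge_atTop 10] with V hV
    rw [Real.norm_eq_abs, Real.norm_eq_abs,
      abs_of_nonneg (mul_nonneg (Real.rpow_nonneg (by linarith) _) (sq_nonneg _)), ← mul_assoc]
    exact hbound V hV
  have hlog : (fun V => Real.log V ^ 2) =O[atTop] fun V => V ^ (a - 1/2) := by
    refine (((isLittleO_log_rpow_atTop (r := (a - 1/2)/2) (by linarith)).pow
      two_pos).isBigO).congr' EventuallyEq.rfl ?_
    filter_upwards [eventually_ge_atTop 0] with V hV
    rw [← Real.rpow_natCast, ← Real.rpow_mul hV]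
    norm_num
  refine hR.trans (((isBigO_refl _ _).mul hlog).congr' EventuallyEq.rfl ?_)
  filter_upwards [eventually_gt_atTop 0] with V hV
  rw [← Real.rpow_add hV]
  norm_num

theorem rpow_mul_rpow_eventuallyEq (a b : ℝ) :
    (fun V : ℝ => V ^ a * V ^ b) =ᶠ[atTop] fun V => V ^ (a + b) := by
  filter_upwards [eventually_gt_atTop 0] with V hV
  rw [Real.rpow_add hV]

section PowerWeights

variable {R : ℝ → ℝ} {a b : ℝ}

theorem tendsto_mul_rpow_neg_of_isBigO (hR : R =O[atTop] (· ^ a)) (hab : a < b) :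
    Tendsto (fun B => R B * B ^ (-b)) atTop (𝓝 0) := by
  refine (hR.mul (isBigO_refl (fun B : ℝ => B ^ (-b)) atTop)).trans_tendsto ?_
  refine (tendsto_rpow_neg_atTop (sub_pos.2 hab)).congr' ?_
  filter_upwards [rpow_mul_rpow_eventuallyEq a (-b)] with V hV
  rw [hV]
  ring_nf

theorem integrableOn_Ioi_mul_rpow_of_isBigO {A : ℝ} (hA : 0 < A) (hRint : LocallyIntegrable R)
    (hR : R =O[atTop] (· ^ a)) (hab : a < b) :
    IntegrableOn (fun V => R V * V ^ (-b - 1)) (Ioi A) := by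
  have hloc : LocallyIntegrableOn (fun V => R V * V ^ (-b - 1)) (Ici A) :=
    (hRint.locallyIntegrableOn _).mul_continuousOn
      (continuousOn_id.rpow_const fun V hV => Or.inl (hA.trans_le hV).ne')
      isClosed_Ici.isLocallyClosed
  have hO : (fun V => R V * V ^ (-b - 1)) =O[atTop] fun V => V ^ (a + (-b - 1)) :=
    (hR.mul (isBigO_refl _ _)).congr' EventuallyEq.rfl (rpow_mul_rpow_eventuallyEq _ _)
  exact (hloc.integrableOn_of_isBigO_atTop hO
    (integrableAtFilter_rpow_atTop_iff.2 (by linarith))).mono_set Ioi_subset_Ici_self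

end PowerWeights

theorem exists_tendsto_RInt {t : ℕ → ℝ} (htop : Tendsto t atTop atTop) {K : ℝ}
    (hbound : ∀ V : ℝ, 10 ≤ V → |Rpt t V| ≤ K * V ^ ((1:ℝ)/2) * Real.log V ^ 2)
    {A c : ℝ} (hA : 0 < A) (hc : 1/4 < c) :
    ∃ l, Tendsto (fun B => RInt t c A B) atTop (𝓝 l) := by
  -- any exponent strictly between `1/2` and `2c` would do
  have hO := Rpt_isBigO_rpow hbound (a := c + 1/4) (by linarith)
  have hint := integrableOn_Ioi_mul_rpow_of_isBigO hA (locallyIntegrable_Rpt htop) hO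
    (b := 2*c) (by linarith)
  have hlim := ((tendsto_mul_rpow_neg_of_isBigO hO (b := 2*c) (by linarith)).sub_const
    (Rpt t A * A ^ (-(2*c)))).add
    ((intervalIntegral_tendsto_integral_Ioi A hint tendsto_id).const_mul (2*c))
  refine ⟨_, hlim.congr' ?_⟩
  filter_upwards [eventually_ge_atTop A] with B hB
  have hderiv : ∀ x ∈ Icc A B, HasDerivAt (fun V => V ^ (-(2*c)))
      (-(2*c) * x ^ (-(2*c) - 1)) x := fun x hx =>
    Real.hasDerivAt_rpow_const (Or.inl (hA.trans_le hx.1).ne')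
  have hcont : ContinuousOn (fun x => -(2*c) * x ^ (-(2*c) - 1)) (Icc A B) :=
    continuousOn_const.mul (continuousOn_id.rpow_const fun x hx => Or.inl (hA.trans_le hx.1).ne')
  rw [RInt, two_tsum_sub_integral_eq htop hB hderiv hcont, id, intervalIntegral.integral_of_le hB]
  simp_rw [mul_left_comm _ (-(2*c)), integral_const_mul]
  ring

theorem stmt_10_general (t : ℕ → ℝ)
    (htop : Tendsto t atTop atTop)
    (K : ℝ)
    (hbound : ∀ V : ℝ, 10 ≤ V → |Rpt t V| ≤ K * V ^ ((1:ℝ)/2) * Real.log V ^ 2) :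
    (∀ c ∈ Set.Ioo (1/4:ℝ) (1/2), ∃ l : ℝ,
      Tendsto (fun A => 2 * (∑' j : ℕ, if t j ≤ A then t j ^ (-(2*c)) else 0)
          - A ^ (1 - 2*c) / (1 - 2*c))
        atTop (𝓝 l)) ∧
    (∀ A : ℝ, 0 < A → ∀ c : ℝ, 1/4 < c → ∃ l : ℝ,
      Tendsto (fun B => RInt t c A B) atTop (𝓝 l)) := by
  refine ⟨fun c hc => ?_, fun A hA c hc => exists_tendsto_RInt htop hbound hA hc⟩
  obtain ⟨l, hl⟩ := exists_tendsto_RInt htop hbound one_pos hc.1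
  have h2c : 0 < 1 - 2*c := by linarith [hc.2]
  refine ⟨l + (2 * (∑' j, if t j ≤ 1 then t j ^ (-(2*c)) else 0) - 1 / (1 - 2*c)),
    (hl.add_const _).congr' ?_⟩
  filter_upwards [eventually_ge_atTop 1] with B hB
  have hI : ∫ V in Ioc 1 B, V ^ (-(2*c)) = (B ^ (1 - 2*c) - 1) / (1 - 2*c) := by
    rw [← intervalIntegral.integral_of_le hB, integral_rpow (Or.inl (by linarith)),
      Real.one_rpow, neg_add_eq_sub]
  rw [RInt, hI, tsum_ite_le_eq_add htop _ hB]
  field_simp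
  ring

/-- If `|R(V)| ≤ K V^(1/2) (log V)²` for `V ≥ 10` then `H(c) = ∫_0^∞ V^(-2c) dR(V)` converges
for all `c ∈ (1/4,1/2)`, and `∫_A^∞ V^(-2c) dR(V)` converges for all `A > 0` and `c > 1/4`. -/
theorem stmt_10 (t : ℕ → ℝ) (hpos : ∀ j, 0 < t j) (hmono : StrictMono t)
    (htop : Tendsto t atTop atTop)
    (K : ℝ) (hK : 0 < K)
    (hbound : ∀ V : ℝ, 10 ≤ V → |Rpt t V| ≤ K * V ^ ((1:ℝ)/2) * Real.log V ^ 2) :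
    (∀ c ∈ Set.Ioo (1/4:ℝ) (1/2), ∃ l : ℝ,
      Tendsto (fun A => 2 * (∑' j : ℕ, if t j ≤ A then t j ^ (-(2*c)) else 0)
          - A ^ (1 - 2*c) / (1 - 2*c))
        atTop (𝓝 l)) ∧
    (∀ A : ℝ, 0 < A → ∀ c : ℝ, 1/4 < c → ∃ l : ℝ,
      Tendsto (fun B => RInt t c A B) atTop (𝓝 l)) :=
  stmt_10_general t htop K hbound
end

section
/- For every integer n ≥ 1 and every s ∈ ℂ with Re s < n/2, the function x ↦ G(s, π|x|²) is integrable on ℝⁿ and ∫_{ℝⁿ} G(s, π|x|²) dx = 1/(n/2 − s). -/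
open MeasureTheory ProbabilityTheory Filter Topology Set
open scoped Classical

/-- `G(s,x) = ∫_1^∞ t^(s-1) e^(-xt) dt` for complex `s` and real `x > 0`. -/
noncomputable def GC (s : ℂ) (x : ℝ) : ℂ :=
  ∫ t in Set.Ioi (1:ℝ), (t:ℂ) ^ (s - 1) * Complex.exp (-((x * t : ℝ) : ℂ))

/-
Write `G(s, x) = ∫_1^∞ t^(s-1) e^(-xt) dt` and integrate over `x ∈ ℝⁿ` first: the Gaussian
integral `∫ e^(-π t |x|²) dx = t^(-n/2)` leaves `∫_1^∞ t^(s-1-n/2) dt = 1/(n/2 - s)`. Fubini is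
justified because the same computation with `|t^(s-1)| = t^(Re s - 1)` is finite when `Re s < n/2`.
-/

open Real

lemma continuous_nsq (n : ℕ) : Continuous (nsq : (Fin n → ℝ) → ℝ) :=
  continuous_finsetSum _ fun i _ => (continuous_apply i).pow 2

lemma exp_neg_mul_nsq (n : ℕ) (b : ℝ) (x : Fin n → ℝ) :
    exp (-(b * nsq x)) = ∏ i, exp (-b * x i ^ 2) := by
  rw [← exp_sum, nsq, Finset.mul_sum, ← Finset.sum_neg_distrib]
  simp only [neg_mul]

lemma integrable_exp_neg_mul_nsq (n : ℕ) {b : ℝ} (hb : 0 < b) :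
    Integrable (fun x : Fin n → ℝ => exp (-(b * nsq x))) := by
  simp_rw [exp_neg_mul_nsq]
  exact Integrable.fintype_prod fun _ => integrable_exp_neg_mul_sq hb

lemma integral_exp_neg_pi_mul_nsq (n : ℕ) {t : ℝ} (ht : 0 < t) :
    ∫ x : Fin n → ℝ, exp (-(π * t * nsq x)) = t ^ (-(n : ℝ) / 2) := by
  simp_rw [exp_neg_mul_nsq, volume_pi]
  rw [integral_fintype_prod_eq_pow (fun y => exp (-(π * t) * y ^ 2)), integral_gaussian,
    show π / (π * t) = t⁻¹ by field_simp, sqrt_eq_rpow, ← rpow_natCast, ← rpow_mul (by positivity),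
    inv_rpow ht.le, ← rpow_neg ht.le]
  simp only [Fintype.card_fin]
  ring_nf

noncomputable def gcIntegrand (s : ℂ) (x t : ℝ) : ℂ :=
  (t : ℂ) ^ (s - 1) * Complex.exp (-((x * t : ℝ) : ℂ))

lemma gcIntegrand_eq (s : ℂ) (x t : ℝ) :
    gcIntegrand s x t = (t : ℂ) ^ (s - 1) * (exp (-(x * t)) : ℂ) := by
  simp only [gcIntegrand, Complex.ofReal_exp, Complex.ofReal_neg]

lemma norm_gcIntegrand {t : ℝ} (ht : 0 < t) (s : ℂ) (x : ℝ) :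
    ‖gcIntegrand s x t‖ = t ^ (s.re - 1) * exp (-(x * t)) := by
  rw [gcIntegrand_eq, norm_mul, Complex.norm_cpow_eq_rpow_re_of_pos ht, Complex.norm_real,
    norm_of_nonneg (exp_pos _).le, Complex.sub_re, Complex.one_re]

lemma integral_gcIntegrand_pi_mul_nsq (n : ℕ) {t : ℝ} (ht : 0 < t) (s : ℂ) :
    ∫ x : Fin n → ℝ, gcIntegrand s (π * nsq x) t = (t : ℂ) ^ (s - 1 - n / 2) := by
  simp_rw [gcIntegrand_eq, mul_right_comm π, integral_const_mul]
  rw [integral_complex_ofReal, integral_exp_neg_pi_mul_nsq n ht, Complex.ofReal_cpow ht.le,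
    ← Complex.cpow_add _ _ (Complex.ofReal_ne_zero.2 ht.ne')]
  push_cast
  ring_nf

lemma integral_norm_gcIntegrand_pi_mul_nsq (n : ℕ) {t : ℝ} (ht : 0 < t) (s : ℂ) :
    ∫ x : Fin n → ℝ, ‖gcIntegrand s (π * nsq x) t‖ = t ^ (s.re - 1 - n / 2) := by
  simp_rw [norm_gcIntegrand ht, mul_right_comm π, integral_const_mul,
    integral_exp_neg_pi_mul_nsq n ht, ← rpow_add ht]
  ring_nf

lemma integrable_gcIntegrand_pi_mul_nsq_prod {n : ℕ} {s : ℂ} (hs : s.re < n / 2) :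
    Integrable (fun p : (Fin n → ℝ) × ℝ => gcIntegrand s (π * nsq p.1) p.2)
      ((volume : Measure (Fin n → ℝ)).prod (volume.restrict (Ioi 1))) := by
  have hmeas : AEStronglyMeasurable (fun p : (Fin n → ℝ) × ℝ => gcIntegrand s (π * nsq p.1) p.2)
      ((volume : Measure (Fin n → ℝ)).prod (volume.restrict (Ioi 1))) := by
    have := (continuous_nsq n).measurable
    unfold gcIntegrand
    fun_prop
  refine (integrable_prod_iff' hmeas).2 ⟨?_, ?_⟩
  · filter_upwards [ae_restrict_mem measurableSet_Ioi] with t (ht : 1 < t)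
    simp_rw [gcIntegrand_eq, mul_right_comm π]
    exact (integrable_exp_neg_mul_nsq n (by positivity)).ofReal.const_mul _
  · refine (integrableOn_Ioi_rpow_of_lt (a := s.re - 1 - n / 2) (by linarith)
      one_pos).congr_fun_ae ?_
    filter_upwards [ae_restrict_mem measurableSet_Ioi] with t (ht : 1 < t)
    exact (integral_norm_gcIntegrand_pi_mul_nsq n (one_pos.trans ht) s).symm

theorem stmt_14_general (n : ℕ) (s : ℂ) (hs : s.re < (n:ℝ)/2) :
    Integrable (fun x : Fin n → ℝ => GC s (Real.pi * nsq x)) volume ∧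
    ∫ x : Fin n → ℝ, GC s (Real.pi * nsq x) = 1/((n:ℂ)/2 - s) := by
  have hF := integrable_gcIntegrand_pi_mul_nsq_prod hs
  have hre : (s - 1 - n / 2).re < -1 := by
    simp only [Complex.sub_re, Complex.one_re, Complex.div_ofNat_re, Complex.natCast_re]
    linarith
  refine ⟨hF.integral_prod_left, ?_⟩
  calc ∫ x : Fin n → ℝ, GC s (π * nsq x)
      = ∫ t in Ioi 1, ∫ x : Fin n → ℝ, gcIntegrand s (π * nsq x) t := integral_integral_swap hF
    _ = ∫ t in Ioi (1 : ℝ), (t : ℂ) ^ (s - 1 - n / 2) :=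
        setIntegral_congr_fun measurableSet_Ioi fun t (ht : 1 < t) =>
          integral_gcIntegrand_pi_mul_nsq n (one_pos.trans ht) s
    _ = 1 / ((n : ℂ) / 2 - s) := by
        rw [integral_Ioi_cpow_of_lt hre one_pos, Complex.ofReal_one, Complex.one_cpow,
          show s - 1 - n / 2 + 1 = -(n / 2 - s) by ring, div_neg, neg_div, neg_neg]

/-- For `Re s < n/2`, `x ↦ G(s, π|x|²)` is integrable on `ℝⁿ` with integral `1/(n/2 - s)`. -/
theorem stmt_14 (n : ℕ) (hn : 1 ≤ n) (s : ℂ) (hs : s.re < (n:ℝ)/2) :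
    Integrable (fun x : Fin n → ℝ => GC s (Real.pi * nsq x)) volume ∧
    ∫ x : Fin n → ℝ, GC s (Real.pi * nsq x) = 1/((n:ℂ)/2 - s) :=
  stmt_14_general n s hs
end
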